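/- arXiv:0704.2534 — 5 statements merged into one kernel-verified Lean document; each statement's English description precedes it below -/
import Mathlib

section
/- Let x ∈ ℝ^d and suppose there exist d linearly independent vectors Δ₁, …, Δ_d ∈ ℤ^d with |Δ_k| ≤ A₁ and |x·Δ_k| ≤ A₂ for all k = 1, …, d. Then |x| ≤ C(d)·A₁^{d−1}·A₂, for a constant C(d) depending only on d. -/
/-!
Let `M` be the integer matrix with rows `Δ_k`. Cramer's rule gives `det M · x_i = det M_i`, where
`M_i` is `M` with its `i`-th column replaced by `M x = (x·Δ_k)_k`. That column is bounded by `A₂`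
and all other entries by `A₁`, so the Leibniz expansion gives `|det M_i| ≤ d! A₁^(d-1) A₂`. Since
`det M` is a nonzero integer, `|det M| ≥ 1`; hence `|x_i| ≤ d! A₁^(d-1) A₂` for every `i`, and
`|x| ≤ √d · d! · A₁^(d-1) A₂`.
-/

open Finset Matrix

namespace Matrix

variable {n : Type*} [Fintype n] [DecidableEq n]

theorem det_ne_zero_of_linearIndependent_row {A : Type*} [CommRing A] [IsDomain A]
    {M : Matrix n n A} (h : LinearIndependent A M.row) : M.det ≠ 0 := by
  intro hdet
  obtain ⟨v, hv, hvM⟩ := exists_vecMul_eq_zero_iff.mpr hdet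
  rw [vecMul_eq_sum] at hvM
  exact hv (funext (Fintype.linearIndependent_iff.mp h v hvM))

theorem det_mul_eq_det_updateCol_mulVec {R : Type*} [CommRing R] (M : Matrix n n R)
    (x : n → R) (i : n) : M.det * x i = (M.updateCol i (M *ᵥ x)).det := by
  rw [← cramer_apply, cramer_eq_adjugate_mulVec, mulVec_mulVec, adjugate_mul, smul_mulVec,
    one_mulVec, Pi.smul_apply, smul_eq_mul]

theorem abs_det_le_of_abs_col_le {R : Type*} [CommRing R] [LinearOrder R]
    [IsStrictOrderedRing R] {M : Matrix n n R} {j : n} {a b : R} (hcol : ∀ k, |M k j| ≤ b)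
    (hrest : ∀ k i, i ≠ j → |M k i| ≤ a) :
    |M.det| ≤ (Fintype.card n).factorial * a ^ (Fintype.card n - 1) * b := by
  have hterm (σ : Equiv.Perm n) :
      |Equiv.Perm.sign σ • ∏ i, M (σ i) i| ≤ a ^ (Fintype.card n - 1) * b := by
    rw [Units.smul_def, abs_zsmul, Int.isUnit_iff_abs_eq.mp (Units.isUnit _), one_smul,
      abs_prod]
    calc ∏ i, |M (σ i) i| ≤ ∏ i, Function.update (fun _ => a) j b i := by
          refine prod_le_prod (fun _ _ => abs_nonneg _) fun i _ => ?_
          rcases eq_or_ne i j with rfl | hij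
          · simpa using hcol (σ i)
          · simpa [hij] using hrest (σ i) i hij
      _ = a ^ (Fintype.card n - 1) * b := by
          rw [prod_update_of_mem (mem_univ j), prod_const, ← compl_eq_univ_sdiff, card_compl,
            card_singleton, mul_comm]
  calc |M.det| ≤ ∑ σ : Equiv.Perm n, |Equiv.Perm.sign σ • ∏ i, M (σ i) i| := by
        rw [det_apply]; exact abs_sum_le_sum_abs _ _
    _ ≤ ∑ _σ : Equiv.Perm n, a ^ (Fintype.card n - 1) * b := sum_le_sum fun σ _ => hterm σ
    _ = _ := by simp [Fintype.card_perm, mul_assoc]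

end Matrix

section EuclideanNorm

variable {ι : Type*} [Fintype ι]

theorem abs_le_sqrt_sum_sq (v : ι → ℝ) (i : ι) : |v i| ≤ √(∑ j, v j ^ 2) :=
  Real.abs_le_sqrt (single_le_sum (fun j _ => sq_nonneg (v j)) (mem_univ i))

theorem sqrt_sum_sq_le_of_abs_le {v : ι → ℝ} {K : ℝ} (hK : 0 ≤ K) (hv : ∀ i, |v i| ≤ K) :
    √(∑ i, v i ^ 2) ≤ √(Fintype.card ι) * K := by
  have hsum : ∑ i, v i ^ 2 ≤ Fintype.card ι * K ^ 2 := by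
    calc ∑ i, v i ^ 2 ≤ ∑ _i : ι, K ^ 2 :=
          sum_le_sum fun i _ => sq_le_sq' (abs_le.mp (hv i)).1 (abs_le.mp (hv i)).2
      _ = Fintype.card ι * K ^ 2 := by simp
  calc √(∑ i, v i ^ 2) ≤ √(Fintype.card ι * K ^ 2) := Real.sqrt_le_sqrt hsum
    _ = √(Fintype.card ι) * K := by rw [Real.sqrt_mul (Nat.cast_nonneg _), Real.sqrt_sq hK]

end EuclideanNorm

theorem stmt6 (d : ℕ) (hd : 0 < d) :
    ∃ C : ℝ, 0 < C ∧
      ∀ (x : Fin d → ℝ) (Δ : Fin d → Fin d → ℤ) (A₁ A₂ : ℝ),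
        0 < A₁ → 0 < A₂ →
        LinearIndependent ℤ Δ →
        (∀ k, Real.sqrt (∑ i, ((Δ k i : ℝ)) ^ 2) ≤ A₁) →
        (∀ k, |∑ i, x i * (Δ k i : ℝ)| ≤ A₂) →
        Real.sqrt (∑ i, (x i) ^ 2) ≤ C * A₁ ^ (d - 1) * A₂ := by
  refine ⟨√d * d.factorial, mul_pos (Real.sqrt_pos.mpr (Nat.cast_pos.mpr hd))
    (Nat.cast_pos.mpr d.factorial_pos), fun x Δ A₁ A₂ hA₁ hA₂ hΔ hA₁Δ hA₂Δ => ?_⟩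
  set M : Matrix (Fin d) (Fin d) ℝ := (Matrix.of Δ).map (↑)
  have hdet : 1 ≤ |M.det| := by
    rw [← Int.cast_det, ← Int.cast_abs]
    exact_mod_cast Int.one_le_abs (det_ne_zero_of_linearIndependent_row hΔ)
  have hcoord (i : Fin d) : |x i| ≤ d.factorial * A₁ ^ (d - 1) * A₂ := by
    have hbound := abs_det_le_of_abs_col_le (M := M.updateCol i (M *ᵥ x)) (j := i)
      (fun k => by simpa [M, mulVec, dotProduct, mul_comm] using hA₂Δ k)
      (fun k l hl => by
        rw [updateCol_ne hl]
        exact (abs_le_sqrt_sum_sq (fun j => (Δ k j : ℝ)) l).trans (hA₁Δ k))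
    calc |x i| ≤ |M.det| * |x i| := le_mul_of_one_le_left (abs_nonneg _) hdet
      _ = |(M.updateCol i (M *ᵥ x)).det| := by
          rw [← abs_mul, det_mul_eq_det_updateCol_mulVec]
      _ ≤ _ := by simpa using hbound
  calc √(∑ i, x i ^ 2) ≤ √d * (d.factorial * A₁ ^ (d - 1) * A₂) := by
        simpa using sqrt_sum_sq_le_of_abs_le (by positivity) hcoord
    _ = √d * d.factorial * A₁ ^ (d - 1) * A₂ := by ring
end

section
/- There exists a constant C > 0 with the following property: if m₁, m₂, m₃ are three distinct points of ℤ² all lying on a circle of radius r > 1, and the two difference vectors w₁ = m₂ − m₁ and w₂ = m₃ − m₂ are linearly independent, then max{|w₁|, |w₂|} ≥ C·r^{1/3}. -/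
/-!
Write `u = m₂ - m₁`, `v = m₃ - m₂` and `D = u × v`. For a triangle inscribed in a circle of
radius `r`, `|u|² |v|² |u + v|² = 4 r² D²` (the circumradius formula `abc = 4 r · Area`). As `D` is
a nonzero integer, `D² ≥ 1`, while `|u + v|² ≤ 2 (|u|² + |v|²)`; hence `r² ≤ M⁶` for
`M = max |u| |v|`, i.e. `M ≥ r^{1/3}`.
-/

section Circumradius

variable {u₁ u₂ v₁ v₂ q₁ q₂ r : ℝ}

/-- Coordinates are taken from the middle vertex: the vertices are `-u`, `0`, `v` and the centre
is `q`. -/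
theorem sq_norm_mul_sq_norm_mul_sq_norm_add_eq_four_mul_sq_mul_sq_cross
    (h₁ : (q₁ + u₁) ^ 2 + (q₂ + u₂) ^ 2 = r ^ 2) (h₂ : q₁ ^ 2 + q₂ ^ 2 = r ^ 2)
    (h₃ : (q₁ - v₁) ^ 2 + (q₂ - v₂) ^ 2 = r ^ 2) :
    (u₁ ^ 2 + u₂ ^ 2) * (v₁ ^ 2 + v₂ ^ 2) * ((u₁ + v₁) ^ 2 + (u₂ + v₂) ^ 2) =
      4 * r ^ 2 * (u₁ * v₂ - u₂ * v₁) ^ 2 := by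
  have hu : 2 * (q₁ * u₁ + q₂ * u₂) = -(u₁ ^ 2 + u₂ ^ 2) := by linear_combination h₁ - h₂
  have hv : 2 * (q₁ * v₁ + q₂ * v₂) = v₁ ^ 2 + v₂ ^ 2 := by linear_combination h₂ - h₃
  -- `(u × v)² |q|² = |⟨q, u⟩ v - ⟨q, v⟩ u|²`, and the circle equations fix both inner products.
  calc (u₁ ^ 2 + u₂ ^ 2) * (v₁ ^ 2 + v₂ ^ 2) * ((u₁ + v₁) ^ 2 + (u₂ + v₂) ^ 2)
      = (-(u₁ ^ 2 + u₂ ^ 2) * v₁ - (v₁ ^ 2 + v₂ ^ 2) * u₁) ^ 2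
          + (-(u₁ ^ 2 + u₂ ^ 2) * v₂ - (v₁ ^ 2 + v₂ ^ 2) * u₂) ^ 2 := by ring
    _ = (2 * (q₁ * u₁ + q₂ * u₂) * v₁ - 2 * (q₁ * v₁ + q₂ * v₂) * u₁) ^ 2
          + (2 * (q₁ * u₁ + q₂ * u₂) * v₂ - 2 * (q₁ * v₁ + q₂ * v₂) * u₂) ^ 2 := by rw [hu, hv]
    _ = 4 * (q₁ ^ 2 + q₂ ^ 2) * (u₁ * v₂ - u₂ * v₁) ^ 2 := by ring
    _ = 4 * r ^ 2 * (u₁ * v₂ - u₂ * v₁) ^ 2 := by rw [h₂]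

theorem le_max_sqrt_pow_three_of_one_le_sq_cross
    (h₁ : (q₁ + u₁) ^ 2 + (q₂ + u₂) ^ 2 = r ^ 2) (h₂ : q₁ ^ 2 + q₂ ^ 2 = r ^ 2)
    (h₃ : (q₁ - v₁) ^ 2 + (q₂ - v₂) ^ 2 = r ^ 2) (hD : 1 ≤ (u₁ * v₂ - u₂ * v₁) ^ 2) :
    r ≤ max √(u₁ ^ 2 + u₂ ^ 2) √(v₁ ^ 2 + v₂ ^ 2) ^ 3 := by
  set A := u₁ ^ 2 + u₂ ^ 2
  set B := v₁ ^ 2 + v₂ ^ 2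
  set M := max √A √B
  have hM : 0 ≤ M := (Real.sqrt_nonneg A).trans (le_max_left _ _)
  have hAM : A ≤ M ^ 2 :=
    (Real.sq_sqrt (by positivity)).symm.le.trans (pow_le_pow_left₀ (by positivity) (le_max_left _ _) 2)
  have hBM : B ≤ M ^ 2 :=
    (Real.sq_sqrt (by positivity)).symm.le.trans (pow_le_pow_left₀ (by positivity) (le_max_right _ _) 2)
  have hW : (u₁ + v₁) ^ 2 + (u₂ + v₂) ^ 2 ≤ 4 * M ^ 2 := by
    nlinarith [sq_nonneg (u₁ - v₁), sq_nonneg (u₂ - v₂)]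
  have hr : r ^ 2 ≤ (M ^ 3) ^ 2 := by
    have := sq_norm_mul_sq_norm_mul_sq_norm_add_eq_four_mul_sq_mul_sq_cross h₁ h₂ h₃
    calc r ^ 2 ≤ r ^ 2 * (u₁ * v₂ - u₂ * v₁) ^ 2 := le_mul_of_one_le_right (sq_nonneg r) hD
      _ = A * B * ((u₁ + v₁) ^ 2 + (u₂ + v₂) ^ 2) / 4 := by rw [this]; ring
      _ ≤ M ^ 2 * M ^ 2 * (4 * M ^ 2) / 4 := by gcongr
      _ = (M ^ 3) ^ 2 := by ring
  exact (le_abs_self r).trans (abs_le_of_sq_le_sq hr (by positivity))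

end Circumradius

theorem one_le_intCast_sq_of_ne_zero {n : ℤ} (h : n ≠ 0) : (1 : ℝ) ≤ (n : ℝ) ^ 2 :=
  mod_cast (one_le_sq_iff_one_le_abs _).mpr (Int.one_le_abs h)

theorem stmt7 : ∃ C : ℝ, 0 < C ∧
    ∀ (m₁ m₂ m₃ : ℤ × ℤ) (c : ℝ × ℝ) (r : ℝ), 1 < r →
      m₁ ≠ m₂ → m₂ ≠ m₃ → m₁ ≠ m₃ →
      ((m₁.1 : ℝ) - c.1) ^ 2 + ((m₁.2 : ℝ) - c.2) ^ 2 = r ^ 2 →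
      ((m₂.1 : ℝ) - c.1) ^ 2 + ((m₂.2 : ℝ) - c.2) ^ 2 = r ^ 2 →
      ((m₃.1 : ℝ) - c.1) ^ 2 + ((m₃.2 : ℝ) - c.2) ^ 2 = r ^ 2 →
      (m₂.1 - m₁.1) * (m₃.2 - m₂.2) - (m₂.2 - m₁.2) * (m₃.1 - m₂.1) ≠ 0 →
      C * r ^ ((1 : ℝ) / 3) ≤
        max (Real.sqrt (((m₂.1 - m₁.1 : ℤ) : ℝ) ^ 2 + ((m₂.2 - m₁.2 : ℤ) : ℝ) ^ 2))
            (Real.sqrt (((m₃.1 - m₂.1 : ℤ) : ℝ) ^ 2 + ((m₃.2 - m₂.2 : ℤ) : ℝ) ^ 2)) := by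
  refine ⟨1, one_pos, fun m₁ m₂ m₃ c r hr _ _ _ h₁ h₂ h₃ hD => ?_⟩
  have hr₀ : 0 ≤ r := zero_le_one.trans hr.le
  have key := le_max_sqrt_pow_three_of_one_le_sq_cross
    (r := r) (q₁ := c.1 - m₂.1) (q₂ := c.2 - m₂.2) (u₁ := ((m₂.1 - m₁.1 : ℤ) : ℝ))
    (u₂ := ((m₂.2 - m₁.2 : ℤ) : ℝ)) (v₁ := ((m₃.1 - m₂.1 : ℤ) : ℝ)) (v₂ := ((m₃.2 - m₂.2 : ℤ) : ℝ))
    (by push_cast; linear_combination h₁) (by linear_combination h₂)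
    (by push_cast; linear_combination h₃) (by exact_mod_cast one_le_intCast_sq_of_ne_zero hD)
  rw [one_mul, one_div, Real.rpow_inv_le_iff_of_pos hr₀ (by positivity) (by norm_num)]
  exact_mod_cast key
end

section
/- Let 𝒱 be a finite alphabet with a map w : 𝒱 → ℤ^D, and let C = (q₀; v₁…v_n) be a chain, i.e. a sequence q₀, q₁, …, q_n in ℤ^D with q_k = q_{k−1} + w(v_k) and ⟨q_k − v_k(2), w(v_k)⟩ = 0 for all k, where each letter v = (v(1), v(2)) is a pair of vectors and w(v) = v(1) − v(2). If the word v₁…v_n contains a contiguous substring of the form v₀ a₀ v₀ (the same letter v₀ at both ends), then ⟨w(v₀ a₀), w(v₀)⟩ = 0. -/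
/-!
The orthogonality condition at a step reads `⟨q + w(v) - v(2), w(v)⟩ = 0`, where `q` is the point before
the step and `v` its letter. Writing it at both occurrences of `v₀` and subtracting leaves
`⟨q' - q, w(v₀)⟩ = 0` for the points `q`, `q'` just before them, and `q' - q = w(v₀ a₀)` by telescoping.
-/

open Finset Matrix

theorem sum_Ico_eq_sub_of_succ_eq_add {M : Type*} [AddCommGroup M] {q d : ℕ → M} {i j : ℕ}
    (hij : i ≤ j) (hrec : ∀ k ∈ Ico i j, q (k + 1) = q k + d k) :
    ∑ k ∈ Ico i j, d k = q j - q i := by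
  rw [← sum_Ico_sub q hij]
  exact sum_congr rfl fun k hk => by rw [hrec k hk, add_sub_cancel_left]

theorem sub_dotProduct_eq_zero_of_letter_eq {ι R : Type*} [Fintype ι] [CommRing R]
    {v : ℕ → (ι → R) × (ι → R)} {q : ℕ → ι → R} {i j : ℕ}
    (hrec_i : q (i + 1) = q i + ((v i).1 - (v i).2))
    (hrec_j : q (j + 1) = q j + ((v j).1 - (v j).2))
    (horth_i : (q (i + 1) - (v i).2) ⬝ᵥ ((v i).1 - (v i).2) = 0)
    (horth_j : (q (j + 1) - (v j).2) ⬝ᵥ ((v j).1 - (v j).2) = 0) (hvv : v i = v j) :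
    (q j - q i) ⬝ᵥ ((v i).1 - (v i).2) = 0 := by
  rw [hvv] at hrec_i horth_i ⊢
  have hdiff : q j - q i = (q (j + 1) - (v j).2) - (q (i + 1) - (v j).2) := by
    rw [hrec_i, hrec_j]; abel
  rw [hdiff, sub_dotProduct, horth_i, horth_j, sub_zero]

theorem stmt9 (D n : ℕ) (v : ℕ → (Fin D → ℤ) × (Fin D → ℤ))
    (q : ℕ → Fin D → ℤ)
    (hrec : ∀ k < n, q (k + 1) = q k + ((v k).1 - (v k).2))
    (horth : ∀ k < n,
      ∑ i, (q (k + 1) i - (v k).2 i) * ((v k).1 i - (v k).2 i) = 0)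
    (i j : ℕ) (hij : i < j) (hjn : j < n) (hvv : v i = v j) :
    ∑ idx, (∑ l ∈ Finset.Ico i j, ((v l).1 idx - (v l).2 idx)) *
        ((v i).1 idx - (v i).2 idx) = 0 := by
  have hin : i < n := hij.trans hjn
  have htelescope : ∑ l ∈ Ico i j, ((v l).1 - (v l).2) = q j - q i :=
    sum_Ico_eq_sub_of_succ_eq_add hij.le fun k hk => hrec k ((mem_Ico.mp hk).2.trans hjn)
  have horth_ij := sub_dotProduct_eq_zero_of_letter_eq (hrec i hin) (hrec j hjn)
    (horth i hin) (horth j hjn) hvv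
  rw [← htelescope] at horth_ij
  simpa only [dotProduct, Finset.sum_apply, Pi.sub_apply] using horth_ij
end

section
/- Under the hypotheses of the chain lemma, if the word a of a chain C = (q₀; a) contains a contiguous substring a₀ b₀ a₀ where the word a₀ contains every letter of the alphabet 𝒱, then w(a₀ b₀) = 0, i.e. a₀ b₀ is a loop. -/
/-! Every letter `x` of `a₀` occurs at the same position in both copies of `a₀`. The steps
strictly after the first occurrence up to the second form a cyclic rotation of `a₀ b₀`, so they
sum to `w(a₀ b₀)`, and subtracting the chain conditions at the two occurrences shows that this sum
is orthogonal to `w(x)`. Being an integer combination of the `w(x)`, it vanishes. -/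

open Finset

theorem sub_eq_sum_Ico_of_succ_eq_add {G : Type*} [AddCommGroup G] {q w : ℕ → G} {j m : ℕ}
    (hjm : j ≤ m) (h : ∀ k ∈ Ico j m, q (k + 1) = q k + w k) :
    q m - q j = ∑ k ∈ Ico j m, w k := by
  rw [← sum_Ico_sub q hjm]
  exact sum_congr rfl fun k hk => by rw [h k hk, add_sub_cancel_left]

theorem sum_Ico_rotate_of_periodic {M : Type*} [AddCommMonoid M] {w : ℕ → M} {p L s : ℕ}
    (hs : s ≤ L) (hper : ∀ i < s, w (p + L + i) = w (p + i)) :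
    ∑ k ∈ Ico (p + s) (p + s + L), w k = ∑ k ∈ Ico p (p + L), w k := by
  have hwrap : ∑ k ∈ Ico (p + L) (p + s + L), w k = ∑ k ∈ Ico p (p + s), w k := by
    rw [sum_Ico_eq_sum_range, sum_Ico_eq_sum_range]
    rw [show p + s + L - (p + L) = s by omega, show p + s - p = s by omega]
    exact sum_congr rfl fun i hi => hper i (mem_range.mp hi)
  rw [← sum_Ico_consecutive w (by omega : p + s ≤ p + L) (by omega : p + L ≤ p + s + L), hwrap,
    ← sum_Ico_consecutive w (by omega : p ≤ p + s) (by omega : p + s ≤ p + L), add_comm]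

theorem sum_Ico_dotProduct_eq_zero_of_eq {ι R : Type*} [Fintype ι] [CommRing R] {n : ℕ}
    {v : ℕ → (ι → R) × (ι → R)} {q : ℕ → ι → R}
    (hrec : ∀ k < n, q (k + 1) = q k + ((v k).1 - (v k).2))
    (horth : ∀ k < n, (q (k + 1) - (v k).2) ⬝ᵥ ((v k).1 - (v k).2) = 0)
    {j k : ℕ} (hjk : j ≤ k) (hk : k < n) (hv : v j = v k) :
    (∑ l ∈ Ico (j + 1) (k + 1), ((v l).1 - (v l).2)) ⬝ᵥ ((v j).1 - (v j).2) = 0 := by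
  rw [← sub_eq_sum_Ico_of_succ_eq_add (by omega) fun l hl => hrec l (by have := mem_Ico.mp hl; omega),
    ← sub_sub_sub_cancel_right _ _ (v j).2, sub_dotProduct, horth j (by omega), hv,
    horth k hk, sub_zero]

theorem stmt10_general (D n : ℕ) (𝒱 : Finset ((Fin D → ℤ) × (Fin D → ℤ)))
    (v : ℕ → (Fin D → ℤ) × (Fin D → ℤ)) (q : ℕ → Fin D → ℤ)
    (hmem : ∀ k < n, v k ∈ 𝒱)
    (hrec : ∀ k < n, q (k + 1) = q k + ((v k).1 - (v k).2))
    (horth : ∀ k < n,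
      ∑ i, (q (k + 1) i - (v k).2 i) * ((v k).1 i - (v k).2 i) = 0)
    (hspan : ∀ z : Fin D → ℤ,
      z ∈ Submodule.span ℤ ((fun x : (Fin D → ℤ) × (Fin D → ℤ) => x.1 - x.2) ''
        (𝒱 : Set ((Fin D → ℤ) × (Fin D → ℤ)))) →
      (∀ x ∈ 𝒱, ∑ idx, z idx * (x.1 idx - x.2 idx) = 0) → z = 0)
    (p la lb : ℕ) (hlen : p + la + lb + la ≤ n)
    (hrep : ∀ t < la, v (p + t) = v (p + la + lb + t))
    (hall : ∀ x ∈ 𝒱, ∃ t < la, v (p + t) = x) :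
    (∑ l ∈ Finset.Ico p (p + la + lb), ((v l).1 - (v l).2)) = 0 := by
  refine hspan _ (Submodule.sum_mem _ fun l hl =>
    Submodule.subset_span ⟨v l, hmem l (by have := mem_Ico.mp hl; omega), rfl⟩) fun x hx => ?_
  obtain ⟨t, ht, rfl⟩ := hall x hx
  have hloop := sum_Ico_dotProduct_eq_zero_of_eq hrec horth
    (by omega : p + t ≤ p + la + lb + t) (by omega) (hrep t ht)
  have hrot : ∑ l ∈ Ico (p + t + 1) (p + la + lb + t + 1), ((v l).1 - (v l).2)
      = ∑ l ∈ Ico p (p + la + lb), ((v l).1 - (v l).2) := by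
    rw [show p + la + lb + t + 1 = p + (t + 1) + (la + lb) by omega,
      show p + t + 1 = p + (t + 1) by omega, add_assoc p la lb]
    exact sum_Ico_rotate_of_periodic (by omega) fun i hi => by
      rw [← add_assoc, ← hrep i (by omega)]
  rwa [hrot] at hloop

theorem stmt10 (D n : ℕ) (𝒱 : Finset ((Fin D → ℤ) × (Fin D → ℤ)))
    (v : ℕ → (Fin D → ℤ) × (Fin D → ℤ)) (q : ℕ → Fin D → ℤ)
    (hmem : ∀ k < n, v k ∈ 𝒱)
    (hrec : ∀ k < n, q (k + 1) = q k + ((v k).1 - (v k).2))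
    (horth : ∀ k < n,
      ∑ i, (q (k + 1) i - (v k).2 i) * ((v k).1 i - (v k).2 i) = 0)
    (hspan : ∀ z : Fin D → ℤ,
      z ∈ Submodule.span ℤ ((fun x : (Fin D → ℤ) × (Fin D → ℤ) => x.1 - x.2) ''
        (𝒱 : Set ((Fin D → ℤ) × (Fin D → ℤ)))) →
      (∀ x ∈ 𝒱, ∑ idx, z idx * (x.1 idx - x.2 idx) = 0) → z = 0)
    (p la lb : ℕ) (hla : 0 < la) (hlen : p + la + lb + la ≤ n)
    (hrep : ∀ t < la, v (p + t) = v (p + la + lb + t))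
    (hall : ∀ x ∈ 𝒱, ∃ t < la, v (p + t) = x) :
    (∑ l ∈ Finset.Ico p (p + la + lb), ((v l).1 - (v l).2)) = 0 :=
  stmt10_general D n 𝒱 v q hmem hrec horth hspan p la lb hlen hrep hall
end

section
/- Let δ > 0 and define, for a point m ∈ ℤ^D, Φ(m) = (m, |m|²) ∈ ℤ^{D+1}. Suppose n₁, …, n_k ∈ ℤ^D is a sequence of distinct points with |n_j| ≤ r for all j and |Φ(n_j) − Φ(n_{j+1})| ≤ C·r^δ for all j = 1, …, k−1, and suppose that all the difference vectors n_j − n₁ lie on a single line through the origin. Then k ≤ (C·r^δ)² + 1. -/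
lemma one_le_of_sq {p : ℝ} (h : 1 ≤ p ^ 2) (h0 : 0 ≤ p) : 1 ≤ p := by nlinarith

lemma lt_two_of_sq {p : ℝ} (h : p ^ 2 < 4) (h0 : 0 ≤ p) : p < 2 := by nlinarith

lemma one_le_sq_mul {a b : ℝ} (ha : 1 ≤ a ^ 2) (hb : 1 ≤ b ^ 2) : 1 ≤ (a * b) ^ 2 := by
  nlinarith

lemma three_pt (B p q u v : ℝ)
    (h1 : p ^ 2 + (p * u) ^ 2 ≤ B ^ 2) (h2 : q ^ 2 + (q * v) ^ 2 ≤ B ^ 2)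
    (e1 : 1 ≤ p ^ 2) (e2 : 1 ≤ q ^ 2) (e3 : 1 ≤ (p + q) ^ 2)
    (hid : p + q = u - v) (hB2 : B ^ 2 < 2) : False := by
  have s1 : u ^ 2 < 1 := by
    linarith [mul_nonneg (by linarith : (0:ℝ) ≤ p ^ 2 - 1) (sq_nonneg u)]
  have s2 : v ^ 2 < 1 := by
    linarith [mul_nonneg (by linarith : (0:ℝ) ≤ q ^ 2 - 1) (sq_nonneg v)]
  rcases le_or_gt 0 (p * q) with hpq | hpq
  · have hpq1 : 1 ≤ p * q := one_le_of_sq (one_le_sq_mul e1 e2) hpq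
    have hideq : (p + q) ^ 2 = (u - v) ^ 2 := by rw [hid]
    linarith [hideq, s1, s2, sq_nonneg (u + v), e1, e2, hpq1]
  · have hpu : p ^ 2 < 2 := by linarith [sq_nonneg (p * u)]
    have hqu : q ^ 2 < 2 := by linarith [sq_nonneg (q * v)]
    rcases le_or_gt 0 p with hp | hp
    · have hq0 : q < 0 := by
        by_contra hq; push_neg at hq
        linarith [mul_nonneg hp hq]
      have hp1 : 1 ≤ p := one_le_of_sq e1 hp
      have hq1 : q ≤ -1 := by
        have := one_le_of_sq (p := -q) (by linarith) (by linarith); linarith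
      have hpl : p < 2 := lt_two_of_sq (by linarith) hp
      have hql : -2 < q := by
        have := lt_two_of_sq (p := -q) (by linarith) (by linarith); linarith
      have hlt : (0:ℝ) < (1 - (p + q)) * (1 + (p + q)) :=
        mul_pos (by linarith) (by linarith)
      nlinarith [e3, hlt]
    · have hq0 : 0 < q := by
        rcases lt_trichotomy q 0 with h | h | h
        · linarith [mul_pos_of_neg_of_neg hp h]
        · exfalso; rw [h, mul_zero] at hpq; exact lt_irrefl 0 hpq
        · exact h
      have hp1 : p ≤ -1 := by
        have := one_le_of_sq (p := -p) (by linarith) (by linarith); linarith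
      have hq1 : 1 ≤ q := one_le_of_sq e2 (le_of_lt hq0)
      have hpl : -2 < p := by
        have := lt_two_of_sq (p := -p) (by linarith) (by linarith); linarith
      have hql : q < 2 := lt_two_of_sq (by linarith) (le_of_lt hq0)
      have hlt : (0:ℝ) < (1 - (p + q)) * (1 + (p + q)) :=
        mul_pos (by linarith) (by linarith)
      nlinarith [e3, hlt]

lemma pt_bound (B a b : ℝ) (hst : (a - b) ^ 2 + (a ^ 2 - b ^ 2) ^ 2 ≤ B ^ 2)
    (hsp : 1 ≤ (a - b) ^ 2) : 2 * a ^ 2 ≤ B ^ 2 ∧ 2 * b ^ 2 ≤ B ^ 2 := by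
  have key : (a + b) ^ 2 ≤ (a ^ 2 - b ^ 2) ^ 2 := by
    nlinarith [mul_nonneg (by linarith : (0:ℝ) ≤ (a - b) ^ 2 - 1) (sq_nonneg (a + b))]
  constructor
  · nlinarith [key, hst, sq_nonneg b]
  · nlinarith [key, hst, sq_nonneg a]

theorem oneD {k : ℕ} (hk2 : 2 ≤ k) (B : ℝ)
    (s : Fin k → ℝ)
    (hsep : ∀ i j : Fin k, i ≠ j → 1 ≤ (s i - s j) ^ 2)
    (hstep : ∀ (m : ℕ) (hm : m + 1 < k),
      (s ⟨m, by omega⟩ - s ⟨m + 1, hm⟩) ^ 2 +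
        ((s ⟨m, by omega⟩) ^ 2 - (s ⟨m + 1, hm⟩) ^ 2) ^ 2 ≤ B ^ 2) :
    (k : ℝ) ≤ B ^ 2 + 1 := by
  have h01 : (⟨0, by omega⟩ : Fin k) ≠ ⟨1, by omega⟩ := by simp [Fin.ext_iff]
  have hB1 : 1 ≤ B ^ 2 := by
    have h0 := hstep 0 (by omega)
    have hs := hsep ⟨0, by omega⟩ ⟨1, by omega⟩ h01
    have := sq_nonneg ((s ⟨0, by omega⟩) ^ 2 - (s ⟨1, by omega⟩) ^ 2)
    linarith
  by_cases hB2 : B ^ 2 < 2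
  · have hk2' : k ≤ 2 := by
      by_contra hcon
      push_neg at hcon
      set x := s ⟨0, by omega⟩
      set y := s ⟨1, by omega⟩
      set z := s ⟨2, by omega⟩
      have h1 : (x - y) ^ 2 + (x ^ 2 - y ^ 2) ^ 2 ≤ B ^ 2 := hstep 0 (by omega)
      have h2 : (y - z) ^ 2 + (y ^ 2 - z ^ 2) ^ 2 ≤ B ^ 2 := hstep 1 (by omega)
      have e1 : 1 ≤ (x - y) ^ 2 := hsep _ _ (by simp [Fin.ext_iff])
      have e2 : 1 ≤ (y - z) ^ 2 := hsep _ _ (by simp [Fin.ext_iff])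
      have e3 : 1 ≤ (x - z) ^ 2 := hsep _ _ (by simp [Fin.ext_iff])
      refine three_pt B (x - y) (y - z) (x + y) (y + z) ?_ ?_ e1 e2 ?_ (by ring) hB2
      · have hr : ((x - y) * (x + y)) ^ 2 = (x ^ 2 - y ^ 2) ^ 2 := by ring
        rw [hr]; exact h1
      · have hr : ((y - z) * (y + z)) ^ 2 = (y ^ 2 - z ^ 2) ^ 2 := by ring
        rw [hr]; exact h2
      · have hr : (x - y) + (y - z) = x - z := by ring
        rw [hr]; exact e3
    have : (k : ℝ) ≤ 2 := by exact_mod_cast hk2'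
    linarith
  · push_neg at hB2
    have hpt : ∀ j : Fin k, 2 * (s j) ^ 2 ≤ B ^ 2 := by
      intro j
      rcases lt_or_ge ((j : ℕ) + 1) k with h | h
      · have hst := hstep j.val h
        have hsp := hsep ⟨j.val, by omega⟩ ⟨j.val + 1, h⟩ (by
          intro hc; have := congrArg Fin.val hc; simp at this)
        have hj : (⟨j.val, by omega⟩ : Fin k) = j := rfl
        rw [hj] at hst hsp
        exact (pt_bound B _ _ hst hsp).1
      · have hj1 : 1 ≤ j.val := by omega
        have hm : (j.val - 1) + 1 < k := by omega
        have hst := hstep (j.val - 1) hm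
        have hje : (⟨(j.val - 1) + 1, hm⟩ : Fin k) = j := by
          apply Fin.ext; simp; omega
        rw [hje] at hst
        have hsp := hsep ⟨j.val - 1, by omega⟩ j (by
          intro hc; have := congrArg Fin.val hc; simp at this; omega)
        exact (pt_bound B _ _ hst hsp).2
    set σ := Tuple.sort s with hσ
    have hmono : Monotone (s ∘ σ) := Tuple.monotone_sort s
    have hchain : ∀ (m : ℕ) (hm : m < k), (m : ℝ) ≤ s (σ ⟨m, hm⟩) - s (σ ⟨0, by omega⟩) := by
      intro m
      induction m with
      | zero => intro hm; simp
      | succ m ih =>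
        intro hm
        have hm' : m < k := by omega
        have hle : s (σ ⟨m, hm'⟩) ≤ s (σ ⟨m + 1, hm⟩) := by
          have := hmono (a := ⟨m, hm'⟩) (b := ⟨m + 1, hm⟩) (by simp [Fin.mk_le_mk])
          simpa using this
        have hne : σ ⟨m, hm'⟩ ≠ σ ⟨m + 1, hm⟩ := by
          intro hcontra
          have := σ.injective hcontra
          simp [Fin.ext_iff] at this
        have hgap := hsep _ _ hne
        have h1 : 1 ≤ s (σ ⟨m + 1, hm⟩) - s (σ ⟨m, hm'⟩) :=
          one_le_of_sq (by linarith [hgap]) (by linarith)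
        have := ih hm'
        push_cast
        linarith
    have hlast : ((k : ℝ) - 1) ≤ s (σ ⟨k - 1, by omega⟩) - s (σ ⟨0, by omega⟩) := by
      have h := hchain (k - 1) (by omega)
      have hcast : ((k - 1 : ℕ) : ℝ) = (k : ℝ) - 1 := by
        push_cast [Nat.cast_sub (by omega : 1 ≤ k)]; ring
      linarith [hcast ▸ h]
    have ha := hpt (σ ⟨k - 1, by omega⟩)
    have hb := hpt (σ ⟨0, by omega⟩)
    set a := s (σ ⟨k - 1, by omega⟩)
    set b := s (σ ⟨0, by omega⟩)
    have hk1 : (1:ℝ) ≤ (k:ℝ) - 1 := by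
      have : (2:ℝ) ≤ (k:ℝ) := by exact_mod_cast hk2
      linarith
    have hprod : 0 ≤ ((a - b) - ((k:ℝ) - 1)) * ((a - b) + ((k:ℝ) - 1)) :=
      mul_nonneg (by linarith) (by linarith)
    have hsq : ((k:ℝ) - 1) ^ 2 ≤ 2 * B ^ 2 := by nlinarith [hprod, ha, hb, sq_nonneg (a + b)]
    have hquartic : ((k:ℝ) - 1) ^ 2 ≤ (B ^ 2) ^ 2 := by
      nlinarith [hsq, mul_nonneg (sq_nonneg B) (by linarith : (0:ℝ) ≤ B ^ 2 - 2)]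
    by_contra hgoal
    push_neg at hgoal
    have h1 : 0 < (k:ℝ) - 1 - B ^ 2 := by linarith
    have h2 : 0 < (k:ℝ) - 1 + B ^ 2 := by linarith
    have := mul_pos h1 h2
    nlinarith [this, hquartic]

lemma sqrt_le_imp {x B : ℝ} (h : Real.sqrt x ≤ B) (hx : 0 ≤ x) : x ≤ B ^ 2 := by
  have h2 := Real.sq_sqrt hx
  nlinarith [Real.sqrt_nonneg x]

theorem stmt14 (D k : ℕ) (hk : 0 < k) (δ C r : ℝ)
    (hδ : 0 < δ) (hC : 0 < C) (hr : 1 < r)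
    (n : Fin k → Fin D → ℤ) (hinj : Function.Injective n)
    (hbound : ∀ j, Real.sqrt (∑ i, ((n j i : ℝ)) ^ 2) ≤ r)
    (hstep : ∀ (j : Fin k) (hj : (j : ℕ) + 1 < k),
      Real.sqrt ((∑ i, ((n j i : ℝ) - (n ⟨(j : ℕ) + 1, hj⟩ i : ℝ)) ^ 2) +
          ((∑ i, ((n j i : ℝ)) ^ 2) - ∑ i, ((n ⟨(j : ℕ) + 1, hj⟩ i : ℝ)) ^ 2) ^ 2) ≤
        C * r ^ δ)
    (hline : ∃ u : Fin D → ℝ, ∀ j, ∃ t : ℝ,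
      (fun i => (n j i : ℝ) - (n ⟨0, hk⟩ i : ℝ)) = fun i => t * u i) :
    (k : ℝ) ≤ (C * r ^ δ) ^ 2 + 1 := by
  set B := C * r ^ δ with hB
  have hBpos : 0 < B := by positivity
  rcases le_or_gt k 1 with hk1 | hk2
  · have : (k : ℝ) ≤ 1 := by exact_mod_cast hk1
    nlinarith [sq_nonneg B]
  · -- k ≥ 2
    obtain ⟨u, hu⟩ := hline
    choose t ht using hu
    have hnt : ∀ j i, (n j i : ℝ) = (n ⟨0, hk⟩ i : ℝ) + t j * u i := by
      intro j i
      have := congrFun (ht j) i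
      try simp only at this
      linarith
    set z0 : Fin k := ⟨0, hk⟩ with hz0
    set U2 := ∑ i, (u i) ^ 2 with hU2
    have hU2nonneg : 0 ≤ U2 := Finset.sum_nonneg fun i _ => sq_nonneg _
    have hU2pos : 0 < U2 := by
      rcases lt_or_eq_of_le hU2nonneg with h | h
      · exact h
      · exfalso
        have hz : ∀ i, u i = 0 := by
          intro i
          have := (Finset.sum_eq_zero_iff_of_nonneg
            (fun i _ => sq_nonneg (u i))).mp h.symm i (Finset.mem_univ i)
          exact pow_eq_zero_iff (n := 2) (by norm_num) |>.mp this
        have heq : n ⟨1, hk2⟩ = n z0 := by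
          funext i
          have h1 := hnt ⟨1, hk2⟩ i
          rw [hz i, mul_zero, add_zero] at h1
          exact_mod_cast h1
        have := hinj heq
        simp [hz0, Fin.ext_iff] at this
    set w := Real.sqrt U2 with hw
    have hwpos : 0 < w := Real.sqrt_pos.mpr hU2pos
    have hw2 : w ^ 2 = U2 := Real.sq_sqrt (le_of_lt hU2pos)
    set A := ∑ i, (n z0 i : ℝ) * u i with hA
    set s : Fin k → ℝ := fun j => A / w + t j * w with hs
    -- sum formulas
    have hdiff : ∀ j j' : Fin k,
        (∑ i, ((n j i : ℝ) - (n j' i : ℝ)) ^ 2) = (t j - t j') ^ 2 * U2 := by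
      intro j j'
      have hterm : ∀ i ∈ Finset.univ,
          ((n j i : ℝ) - (n j' i : ℝ)) ^ 2 = (t j - t j') ^ 2 * (u i) ^ 2 := by
        intro i _
        rw [hnt j i, hnt j' i]; ring
      rw [Finset.sum_congr rfl hterm, ← Finset.mul_sum]
    have hsq : ∀ j : Fin k,
        (∑ i, (n j i : ℝ) ^ 2)
          = (∑ i, (n z0 i : ℝ) ^ 2) + 2 * t j * A + t j ^ 2 * U2 := by
      intro j
      have hterm : ∀ i ∈ Finset.univ,
          (n j i : ℝ) ^ 2 = (n z0 i : ℝ) ^ 2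
            + (2 * t j) * ((n z0 i : ℝ) * u i) + t j ^ 2 * (u i) ^ 2 := by
        intro i _
        rw [hnt j i]; ring
      rw [Finset.sum_congr rfl hterm, Finset.sum_add_distrib, Finset.sum_add_distrib,
        ← Finset.mul_sum, ← Finset.mul_sum]
    -- transfer to s
    have L1 : ∀ j j' : Fin k,
        (s j - s j') ^ 2 = ∑ i, ((n j i : ℝ) - (n j' i : ℝ)) ^ 2 := by
      intro j j'
      rw [hdiff j j']
      have h1 : s j - s j' = (t j - t j') * w := by simp only [hs]; ring
      rw [h1, mul_pow, hw2]
    have L2 : ∀ j j' : Fin k,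
        (s j) ^ 2 - (s j') ^ 2 = (∑ i, (n j i : ℝ) ^ 2) - ∑ i, (n j' i : ℝ) ^ 2 := by
      intro j j'
      rw [hsq j, hsq j']
      have h1 : (s j) ^ 2 - (s j') ^ 2
          = 2 * (t j - t j') * A + (t j ^ 2 - t j' ^ 2) * w ^ 2 := by
        simp only [hs]
        field_simp
        ring
      rw [h1, hw2]
      ring
    -- separation
    have hsep : ∀ i j : Fin k, i ≠ j → 1 ≤ (s i - s j) ^ 2 := by
      intro i j hij
      rw [L1 i j]
      have hne : n i ≠ n j := fun h => hij (hinj h)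
      obtain ⟨d, hd⟩ := Function.ne_iff.mp hne
      have hzd : (1 : ℝ) ≤ ((n i d : ℝ) - (n j d : ℝ)) ^ 2 := by
        have hz : n i d - n j d ≠ 0 := sub_ne_zero.mpr hd
        have h1 : (1 : ℤ) ≤ |n i d - n j d| := Int.one_le_abs hz
        have h2 : (1 : ℤ) ≤ (n i d - n j d) ^ 2 := by nlinarith [sq_abs (n i d - n j d)]
        have : ((1 : ℤ) : ℝ) ≤ (((n i d - n j d) ^ 2 : ℤ) : ℝ) := by exact_mod_cast h2
        push_cast at this
        convert this using 2 <;> push_cast <;> ring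
      calc (1:ℝ) ≤ ((n i d : ℝ) - (n j d : ℝ)) ^ 2 := hzd
        _ ≤ ∑ i', ((n i i' : ℝ) - (n j i' : ℝ)) ^ 2 :=
          Finset.single_le_sum (f := fun i' => ((n i i' : ℝ) - (n j i' : ℝ)) ^ 2)
            (fun i' _ => sq_nonneg _) (Finset.mem_univ d)
    -- step bound
    have hstep' : ∀ (m : ℕ) (hm : m + 1 < k),
        (s ⟨m, by omega⟩ - s ⟨m + 1, hm⟩) ^ 2 +
          ((s ⟨m, by omega⟩) ^ 2 - (s ⟨m + 1, hm⟩) ^ 2) ^ 2 ≤ B ^ 2 := by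
      intro m hm
      have hXle := sqrt_le_imp (hstep ⟨m, by omega⟩ hm) (by positivity)
      rw [L1, L2]
      exact hXle
    -- apply the 1D lemma
    exact oneD hk2 B s hsep hstep'
end
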